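/- Let u, v : ℝ³ → ℝ be smooth functions of (t,y,x) and define the vector fields A_t = ∂/∂t + (λ² + λ v_x + u − v_y) ∂/∂x + (−λ u_x + u_y) ∂/∂λ and A_y = ∂/∂y + (λ + v_x) ∂/∂x − u_x ∂/∂λ acting on functions of (t,y,x,λ). Then [A_t, A_y] = 0 identically in λ if and only if the pair (u,v) satisfies the Einstein–Weyl system: u_{xt} + u_{yy} + (u u_x)_x + v_x u_{xy} − v_y u_{xx} = 0 and v_{xt} + v_{yy} + u v_{xx} + v_x v_{xy} − v_y v_{xx} = 0. -/

import Mathlib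

/-- Partial derivatives of a function of `(t, y, x)`. -/
noncomputable def pt3 (f : ℝ → ℝ → ℝ → ℝ) (t y x : ℝ) : ℝ := deriv (fun s => f s y x) t
noncomputable def py3 (f : ℝ → ℝ → ℝ → ℝ) (t y x : ℝ) : ℝ := deriv (fun s => f t s x) y
noncomputable def px3 (f : ℝ → ℝ → ℝ → ℝ) (t y x : ℝ) : ℝ := deriv (fun s => f t y s) x

/-- Partial derivatives of a function of `(t, y, x, λ)`. -/
noncomputable def qt (f : ℝ → ℝ → ℝ → ℝ → ℝ) (t y x l : ℝ) : ℝ := deriv (fun s => f s y x l) t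
noncomputable def qy (f : ℝ → ℝ → ℝ → ℝ → ℝ) (t y x l : ℝ) : ℝ := deriv (fun s => f t s x l) y
noncomputable def qx (f : ℝ → ℝ → ℝ → ℝ → ℝ) (t y x l : ℝ) : ℝ := deriv (fun s => f t y s l) x
noncomputable def ql (f : ℝ → ℝ → ℝ → ℝ → ℝ) (t y x l : ℝ) : ℝ := deriv (fun s => f t y x s) l

/-- `A_t = ∂/∂t + (λ² + λ v_x + u − v_y) ∂/∂x + (−λ u_x + u_y) ∂/∂λ`. -/
noncomputable def At (u v : ℝ → ℝ → ℝ → ℝ) (f : ℝ → ℝ → ℝ → ℝ → ℝ) :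
    ℝ → ℝ → ℝ → ℝ → ℝ := fun t y x l =>
  qt f t y x l + (l ^ 2 + l * px3 v t y x + u t y x - py3 v t y x) * qx f t y x l
    + (-l * px3 u t y x + py3 u t y x) * ql f t y x l

/-- `A_y = ∂/∂y + (λ + v_x) ∂/∂x − u_x ∂/∂λ`. -/
noncomputable def Ay (u v : ℝ → ℝ → ℝ → ℝ) (f : ℝ → ℝ → ℝ → ℝ → ℝ) :
    ℝ → ℝ → ℝ → ℝ → ℝ := fun t y x l =>
  qy f t y x l + (l + px3 v t y x) * qx f t y x l - px3 u t y x * ql f t y x l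

noncomputable section EWaux

abbrev EW3 : Type := ℝ × ℝ × ℝ
abbrev EW4 : Type := ℝ × ℝ × ℝ × ℝ

/-- directional partial derivative -/
noncomputable def pdv {E : Type*} [NormedAddCommGroup E] [NormedSpace ℝ E]
    (f : E → ℝ) (w : E) (p : E) : ℝ := fderiv ℝ f p w

variable {E : Type*} [NormedAddCommGroup E] [NormedSpace ℝ E]

lemma pdv_contDiff {f : E → ℝ} (hf : ContDiff ℝ (⊤ : ℕ∞) f) (w : E) : ContDiff ℝ (⊤ : ℕ∞) (pdv f w) :=
  (hf.fderiv_right (by simp)).clm_apply contDiff_const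

lemma pdv_comm {f : E → ℝ} (hf : ContDiff ℝ (⊤ : ℕ∞) f) (w z p : E) :
    pdv (pdv f w) z p = pdv (pdv f z) w p := by
  have hd : ∀ q, HasFDerivAt f (fderiv ℝ f q) q :=
    fun q => ((hf.differentiable (by simp)) q).hasFDerivAt
  have hf' : DifferentiableAt ℝ (fderiv ℝ f) p :=
    ((hf.fderiv_right (m := (⊤ : ℕ∞)) (by simp)).differentiable (by simp)) p
  have e : ∀ a b : E, pdv (pdv f a) b p = fderiv ℝ (fderiv ℝ f) p b a := by
    intro a b
    have h := (hf'.hasFDerivAt.clm_apply (hasFDerivAt_const a p)).fderiv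
    show fderiv ℝ (pdv f a) p b = _
    rw [show pdv f a = fun y => (fderiv ℝ f y) a from rfl, h]
    simp
  rw [e, e]
  exact second_derivative_symmetric hd hf'.hasFDerivAt z w

lemma pdv_add {f g : E → ℝ} {p : E} (hf : DifferentiableAt ℝ f p)
    (hg : DifferentiableAt ℝ g p) (w : E) :
    pdv (fun q => f q + g q) w p = pdv f w p + pdv g w p := by
  simp only [pdv]; rw [fderiv_fun_add hf hg]; rfl

lemma pdv_sub {f g : E → ℝ} {p : E} (hf : DifferentiableAt ℝ f p)
    (hg : DifferentiableAt ℝ g p) (w : E) :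
    pdv (fun q => f q - g q) w p = pdv f w p - pdv g w p := by
  simp only [pdv]; rw [fderiv_fun_sub hf hg]; rfl

lemma pdv_neg {f : E → ℝ} {p : E} (w : E) :
    pdv (fun q => -f q) w p = - pdv f w p := by
  simp only [pdv]; rw [fderiv_fun_neg]; rfl

lemma pdv_mul {f g : E → ℝ} {p : E} (hf : DifferentiableAt ℝ f p)
    (hg : DifferentiableAt ℝ g p) (w : E) :
    pdv (fun q => f q * g q) w p = f p * pdv g w p + g p * pdv f w p := by
  simp only [pdv]; rw [fderiv_fun_mul hf hg]; simp [mul_comm]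

lemma pdv_zero_dir {f : E → ℝ} {p : E} : pdv f 0 p = 0 := by
  simp [pdv]


/-- uncurried versions -/
noncomputable def unc4 (f : ℝ → ℝ → ℝ → ℝ → ℝ) : EW4 → ℝ := fun p => f p.1 p.2.1 p.2.2.1 p.2.2.2
noncomputable def unc3 (f : ℝ → ℝ → ℝ → ℝ) : EW3 → ℝ := fun p => f p.1 p.2.1 p.2.2

lemma qt_eq {f : ℝ → ℝ → ℝ → ℝ → ℝ} {t y x l : ℝ}
    (h : DifferentiableAt ℝ (unc4 f) (t, y, x, l)) :
    qt f t y x l = pdv (unc4 f) (1, 0, 0, 0) (t, y, x, l) := by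
  have hι : HasDerivAt (fun s : ℝ => ((s, y, x, l) : EW4)) (1, 0, 0, 0) t :=
    (hasDerivAt_id t).prodMk (hasDerivAt_const t _)
  exact (h.hasFDerivAt.comp_hasDerivAt t hι).deriv

lemma qy_eq {f : ℝ → ℝ → ℝ → ℝ → ℝ} {t y x l : ℝ}
    (h : DifferentiableAt ℝ (unc4 f) (t, y, x, l)) :
    qy f t y x l = pdv (unc4 f) (0, 1, 0, 0) (t, y, x, l) := by
  have hι : HasDerivAt (fun s : ℝ => ((t, s, x, l) : EW4)) (0, 1, 0, 0) y :=
    (hasDerivAt_const y t).prodMk ((hasDerivAt_id y).prodMk (hasDerivAt_const y _))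
  exact (h.hasFDerivAt.comp_hasDerivAt y hι).deriv

lemma qx_eq {f : ℝ → ℝ → ℝ → ℝ → ℝ} {t y x l : ℝ}
    (h : DifferentiableAt ℝ (unc4 f) (t, y, x, l)) :
    qx f t y x l = pdv (unc4 f) (0, 0, 1, 0) (t, y, x, l) := by
  have hι : HasDerivAt (fun s : ℝ => ((t, y, s, l) : EW4)) (0, 0, 1, 0) x :=
    (hasDerivAt_const x t).prodMk ((hasDerivAt_const x y).prodMk
      ((hasDerivAt_id x).prodMk (hasDerivAt_const x _)))
  exact (h.hasFDerivAt.comp_hasDerivAt x hι).deriv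

lemma ql_eq {f : ℝ → ℝ → ℝ → ℝ → ℝ} {t y x l : ℝ}
    (h : DifferentiableAt ℝ (unc4 f) (t, y, x, l)) :
    ql f t y x l = pdv (unc4 f) (0, 0, 0, 1) (t, y, x, l) := by
  have hι : HasDerivAt (fun s : ℝ => ((t, y, x, s) : EW4)) (0, 0, 0, 1) l :=
    (hasDerivAt_const l t).prodMk ((hasDerivAt_const l y).prodMk
      ((hasDerivAt_const l x).prodMk (hasDerivAt_id l)))
  exact (h.hasFDerivAt.comp_hasDerivAt l hι).deriv

lemma pt3_eq {f : ℝ → ℝ → ℝ → ℝ} {t y x : ℝ}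
    (h : DifferentiableAt ℝ (unc3 f) (t, y, x)) :
    pt3 f t y x = pdv (unc3 f) (1, 0, 0) (t, y, x) := by
  have hι : HasDerivAt (fun s : ℝ => ((s, y, x) : EW3)) (1, 0, 0) t :=
    (hasDerivAt_id t).prodMk (hasDerivAt_const t _)
  exact (h.hasFDerivAt.comp_hasDerivAt t hι).deriv

lemma py3_eq {f : ℝ → ℝ → ℝ → ℝ} {t y x : ℝ}
    (h : DifferentiableAt ℝ (unc3 f) (t, y, x)) :
    py3 f t y x = pdv (unc3 f) (0, 1, 0) (t, y, x) := by
  have hι : HasDerivAt (fun s : ℝ => ((t, s, x) : EW3)) (0, 1, 0) y :=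
    (hasDerivAt_const y t).prodMk ((hasDerivAt_id y).prodMk (hasDerivAt_const y _))
  exact (h.hasFDerivAt.comp_hasDerivAt y hι).deriv

lemma px3_eq {f : ℝ → ℝ → ℝ → ℝ} {t y x : ℝ}
    (h : DifferentiableAt ℝ (unc3 f) (t, y, x)) :
    px3 f t y x = pdv (unc3 f) (0, 0, 1) (t, y, x) := by
  have hι : HasDerivAt (fun s : ℝ => ((t, y, s) : EW3)) (0, 0, 1) x :=
    (hasDerivAt_const x t).prodMk ((hasDerivAt_const x y).prodMk (hasDerivAt_id x))
  exact (h.hasFDerivAt.comp_hasDerivAt x hι).deriv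

/-- projection `EW4 → EW3` forgetting `λ`, as a continuous linear map -/
noncomputable def prj : EW4 →L[ℝ] EW3 :=
  (ContinuousLinearMap.fst ℝ ℝ (ℝ × ℝ × ℝ)).prod
    (((ContinuousLinearMap.fst ℝ ℝ (ℝ × ℝ)).prod
      ((ContinuousLinearMap.fst ℝ ℝ ℝ).comp (ContinuousLinearMap.snd ℝ ℝ (ℝ × ℝ)))).comp
      (ContinuousLinearMap.snd ℝ ℝ (ℝ × ℝ × ℝ)))

lemma prj_apply (p : EW4) : prj p = (p.1, p.2.1, p.2.2.1) := rfl

lemma pdv_comp_prj {g : EW3 → ℝ} (hg : Differentiable ℝ g) (w p : EW4) :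
    pdv (fun q => g (prj q)) w p = pdv g (prj w) (prj p) := by
  simp only [pdv]
  rw [show (fun q => g (prj q)) = g ∘ prj from rfl,
    fderiv_comp p (hg (prj p)) prj.differentiableAt, prj.fderiv]
  rfl


lemma pdv3_dir (g : EW3 → ℝ) (p : EW3) (a b c : ℝ) :
    pdv g (a, b, c) p
      = a * pdv g (1,0,0) p + b * pdv g (0,1,0) p + c * pdv g (0,0,1) p := by
  have h : ((a, b, c) : EW3) = a • ((1,0,0) : EW3) + b • ((0,1,0) : EW3) + c • ((0,0,1) : EW3) := by
    simp [Prod.ext_iff]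
  simp only [pdv, h, map_add, map_smul, smul_eq_mul]

lemma pdv4_dir (g : EW4 → ℝ) (p : EW4) (a b c d : ℝ) :
    pdv g (a, b, c, d) p
      = a * pdv g (1,0,0,0) p + b * pdv g (0,1,0,0) p + c * pdv g (0,0,1,0) p
        + d * pdv g (0,0,0,1) p := by
  have h : ((a, b, c, d) : EW4) = a • ((1,0,0,0) : EW4) + b • ((0,1,0,0) : EW4)
      + c • ((0,0,1,0) : EW4) + d • ((0,0,0,1) : EW4) := by
    simp [Prod.ext_iff]
  simp only [pdv, h, map_add, map_smul, smul_eq_mul]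

/-- the λ-coordinate as a CLM -/
noncomputable def lam4 : EW4 →L[ℝ] ℝ :=
  (ContinuousLinearMap.snd ℝ ℝ ℝ).comp ((ContinuousLinearMap.snd ℝ ℝ (ℝ × ℝ)).comp
    (ContinuousLinearMap.snd ℝ ℝ (ℝ × ℝ × ℝ)))

lemma pdv_lam4 (w p : EW4) : pdv (fun q : EW4 => q.2.2.2) w p = w.2.2.2 := by
  simp only [pdv]
  rw [show (fun q : EW4 => q.2.2.2) = ⇑lam4 from rfl, lam4.fderiv]
  rfl

lemma lam4_contDiff : ContDiff ℝ (⊤ : ℕ∞) (fun q : EW4 => q.2.2.2) := lam4.contDiff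

section ops

variable (u v : ℝ → ℝ → ℝ → ℝ)

noncomputable def CoA : EW4 → ℝ := fun p =>
  p.2.2.2 * p.2.2.2 + p.2.2.2 * pdv (unc3 v) (0,0,1) (prj p) + unc3 u (prj p)
    - pdv (unc3 v) (0,1,0) (prj p)
noncomputable def CoB : EW4 → ℝ := fun p =>
  -(p.2.2.2 * pdv (unc3 u) (0,0,1) (prj p)) + pdv (unc3 u) (0,1,0) (prj p)
noncomputable def CoC : EW4 → ℝ := fun p => p.2.2.2 + pdv (unc3 v) (0,0,1) (prj p)
noncomputable def CoD : EW4 → ℝ := fun p => -(pdv (unc3 u) (0,0,1) (prj p))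

noncomputable def XT : EW4 → EW4 := fun p => (1, 0, CoA u v p, CoB u p)
noncomputable def XY : EW4 → EW4 := fun p => (0, 1, CoC v p, CoD u p)

variable {u v}

lemma CoA_contDiff (hu : ContDiff ℝ (⊤ : ℕ∞) (unc3 u)) (hv : ContDiff ℝ (⊤ : ℕ∞) (unc3 v)) : ContDiff ℝ (⊤ : ℕ∞) (CoA u v) :=
  (((lam4_contDiff.mul lam4_contDiff).add
      (lam4_contDiff.mul ((pdv_contDiff hv _).comp prj.contDiff))).add
    (hu.comp prj.contDiff)).sub ((pdv_contDiff hv _).comp prj.contDiff)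

lemma CoB_contDiff (hu : ContDiff ℝ (⊤ : ℕ∞) (unc3 u)) : ContDiff ℝ (⊤ : ℕ∞) (CoB u) :=
  ((lam4_contDiff.mul ((pdv_contDiff hu _).comp prj.contDiff)).neg).add
    ((pdv_contDiff hu _).comp prj.contDiff)

lemma CoC_contDiff (hv : ContDiff ℝ (⊤ : ℕ∞) (unc3 v)) : ContDiff ℝ (⊤ : ℕ∞) (CoC v) :=
  lam4_contDiff.add ((pdv_contDiff hv _).comp prj.contDiff)

lemma CoD_contDiff (hu : ContDiff ℝ (⊤ : ℕ∞) (unc3 u)) : ContDiff ℝ (⊤ : ℕ∞) (CoD u) :=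
  ((pdv_contDiff hu _).comp prj.contDiff).neg

lemma XT_contDiff (hu : ContDiff ℝ (⊤ : ℕ∞) (unc3 u)) (hv : ContDiff ℝ (⊤ : ℕ∞) (unc3 v)) : ContDiff ℝ (⊤ : ℕ∞) (XT u v) :=
  contDiff_const.prodMk (contDiff_const.prodMk ((CoA_contDiff hu hv).prodMk (CoB_contDiff hu)))

lemma XY_contDiff (hu : ContDiff ℝ (⊤ : ℕ∞) (unc3 u)) (hv : ContDiff ℝ (⊤ : ℕ∞) (unc3 v)) : ContDiff ℝ (⊤ : ℕ∞) (XY u v) :=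
  contDiff_const.prodMk (contDiff_const.prodMk ((CoC_contDiff hv).prodMk (CoD_contDiff hu)))

lemma At_eq (hu : ContDiff ℝ (⊤ : ℕ∞) (unc3 u)) (hv : ContDiff ℝ (⊤ : ℕ∞) (unc3 v)) (f : ℝ → ℝ → ℝ → ℝ → ℝ) {t y x l : ℝ}
    (hf : DifferentiableAt ℝ (unc4 f) (t, y, x, l)) :
    At u v f t y x l = fderiv ℝ (unc4 f) (t, y, x, l) (XT u v (t, y, x, l)) := by
  have h3u := (hu.differentiable (by simp)) (t, y, x)
  have h3v := (hv.differentiable (by simp)) (t, y, x)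
  rw [At, qt_eq hf, qx_eq hf, ql_eq hf, px3_eq h3v, py3_eq h3v, px3_eq h3u, py3_eq h3u]
  rw [show XT u v (t,y,x,l) = (1, 0, CoA u v (t,y,x,l), CoB u (t,y,x,l)) from rfl]
  rw [show fderiv ℝ (unc4 f) (t,y,x,l) (1, 0, CoA u v (t,y,x,l), CoB u (t,y,x,l))
      = pdv (unc4 f) (1, 0, CoA u v (t,y,x,l), CoB u (t,y,x,l)) (t,y,x,l) from rfl,
    pdv4_dir (unc4 f) (t,y,x,l) 1 0 (CoA u v (t,y,x,l)) (CoB u (t,y,x,l))]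
  simp only [CoA, CoB, prj_apply, unc3]
  ring

lemma Ay_eq (hu : ContDiff ℝ (⊤ : ℕ∞) (unc3 u)) (hv : ContDiff ℝ (⊤ : ℕ∞) (unc3 v)) (f : ℝ → ℝ → ℝ → ℝ → ℝ) {t y x l : ℝ}
    (hf : DifferentiableAt ℝ (unc4 f) (t, y, x, l)) :
    Ay u v f t y x l = fderiv ℝ (unc4 f) (t, y, x, l) (XY u v (t, y, x, l)) := by
  have h3u := (hu.differentiable (by simp)) (t, y, x)
  have h3v := (hv.differentiable (by simp)) (t, y, x)
  rw [Ay, qy_eq hf, qx_eq hf, ql_eq hf, px3_eq h3v, px3_eq h3u]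
  rw [show XY u v (t,y,x,l) = (0, 1, CoC v (t,y,x,l), CoD u (t,y,x,l)) from rfl]
  rw [show fderiv ℝ (unc4 f) (t,y,x,l) (0, 1, CoC v (t,y,x,l), CoD u (t,y,x,l))
      = pdv (unc4 f) (0, 1, CoC v (t,y,x,l), CoD u (t,y,x,l)) (t,y,x,l) from rfl,
    pdv4_dir (unc4 f) (t,y,x,l) 0 1 (CoC v (t,y,x,l)) (CoD u (t,y,x,l))]
  simp only [CoC, CoD, prj_apply, unc3]
  ring

lemma op_op {Ψ : EW4 → ℝ} (hΨ : ContDiff ℝ (⊤ : ℕ∞) Ψ) {X : EW4 → EW4}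
    (hX : Differentiable ℝ X) (p w : EW4) :
    fderiv ℝ (fun q => fderiv ℝ Ψ q (X q)) p w
      = fderiv ℝ (fderiv ℝ Ψ) p w (X p) + fderiv ℝ Ψ p (fderiv ℝ X p w) := by
  have h1 : HasFDerivAt (fderiv ℝ Ψ) (fderiv ℝ (fderiv ℝ Ψ) p) p :=
    (((hΨ.fderiv_right (m := (⊤ : ℕ∞)) (by simp)).differentiable (by simp)) p).hasFDerivAt
  have h2 := (hX p).hasFDerivAt
  rw [(h1.clm_apply h2).fderiv]
  simp only [ContinuousLinearMap.add_apply, ContinuousLinearMap.coe_comp', Function.comp_apply,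
    ContinuousLinearMap.flip_apply]
  ring

lemma bracket {Ψ : EW4 → ℝ} (hΨ : ContDiff ℝ (⊤ : ℕ∞) Ψ) {X Y : EW4 → EW4}
    (hX : Differentiable ℝ X) (hY : Differentiable ℝ Y) (p : EW4) :
    fderiv ℝ (fun q => fderiv ℝ Ψ q (Y q)) p (X p)
      - fderiv ℝ (fun q => fderiv ℝ Ψ q (X q)) p (Y p)
    = fderiv ℝ Ψ p (fderiv ℝ Y p (X p)) - fderiv ℝ Ψ p (fderiv ℝ X p (Y p)) := by
  rw [op_op hΨ hY p (X p), op_op hΨ hX p (Y p)]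
  have hd : ∀ q, HasFDerivAt Ψ (fderiv ℝ Ψ q) q :=
    fun q => ((hΨ.differentiable (by simp)) q).hasFDerivAt
  have h1 : HasFDerivAt (fderiv ℝ Ψ) (fderiv ℝ (fderiv ℝ Ψ) p) p :=
    (((hΨ.fderiv_right (m := (⊤ : ℕ∞)) (by simp)).differentiable (by simp)) p).hasFDerivAt
  rw [second_derivative_symmetric hd h1 (X p) (Y p)]
  ring

lemma fderiv_XT (hu : ContDiff ℝ (⊤ : ℕ∞) (unc3 u)) (hv : ContDiff ℝ (⊤ : ℕ∞) (unc3 v)) (p w : EW4) :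
    fderiv ℝ (XT u v) p w = (0, 0, pdv (CoA u v) w p, pdv (CoB u) w p) := by
  have hA := (((CoA_contDiff hu hv).differentiable (by simp)) p).hasFDerivAt
  have hB := (((CoB_contDiff hu).differentiable (by simp)) p).hasFDerivAt
  have h : HasFDerivAt (XT u v)
      ((0 : EW4 →L[ℝ] ℝ).prod ((0 : EW4 →L[ℝ] ℝ).prod
        ((fderiv ℝ (CoA u v) p).prod (fderiv ℝ (CoB u) p)))) p :=
    (hasFDerivAt_const 1 p).prodMk ((hasFDerivAt_const 0 p).prodMk (hA.prodMk hB))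
  rw [h.fderiv]
  rfl

lemma fderiv_XY (hu : ContDiff ℝ (⊤ : ℕ∞) (unc3 u)) (hv : ContDiff ℝ (⊤ : ℕ∞) (unc3 v)) (p w : EW4) :
    fderiv ℝ (XY u v) p w = (0, 0, pdv (CoC v) w p, pdv (CoD u) w p) := by
  have hC := (((CoC_contDiff hv).differentiable (by simp)) p).hasFDerivAt
  have hD := (((CoD_contDiff hu).differentiable (by simp)) p).hasFDerivAt
  have h : HasFDerivAt (XY u v)
      ((0 : EW4 →L[ℝ] ℝ).prod ((0 : EW4 →L[ℝ] ℝ).prod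
        ((fderiv ℝ (CoC v) p).prod (fderiv ℝ (CoD u) p)))) p :=
    (hasFDerivAt_const 0 p).prodMk ((hasFDerivAt_const 1 p).prodMk (hC.prodMk hD))
  rw [h.fderiv]
  rfl

lemma fderiv_apply_xl (Ψ : EW4 → ℝ) (p : EW4) (a b : ℝ) :
    fderiv ℝ Ψ p ((0, 0, a, b) : EW4)
      = a * pdv Ψ (0,0,1,0) p + b * pdv Ψ (0,0,0,1) p := by
  rw [show fderiv ℝ Ψ p ((0, 0, a, b) : EW4) = pdv Ψ (0, 0, a, b) p from rfl, pdv4_dir]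
  ring


lemma pdv_CoC (hv : ContDiff ℝ (⊤ : ℕ∞) (unc3 v)) (w p : EW4) :
    pdv (CoC v) w p
      = w.2.2.2 + pdv (pdv (unc3 v) (0,0,1)) (prj w) (prj p) := by
  have hl : DifferentiableAt ℝ (fun q : EW4 => q.2.2.2) p :=
    lam4_contDiff.differentiable (by simp) p
  have hvx : DifferentiableAt ℝ (fun q : EW4 => pdv (unc3 v) (0,0,1) (prj q)) p :=
    (((pdv_contDiff hv _).comp prj.contDiff).differentiable (by simp)) p
  rw [show pdv (CoC v) w p
      = pdv (fun q : EW4 => q.2.2.2 + pdv (unc3 v) (0,0,1) (prj q)) w p from rfl,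
    pdv_add hl hvx, pdv_lam4,
    pdv_comp_prj ((pdv_contDiff hv _).differentiable (by simp))]

lemma pdv_CoD (hu : ContDiff ℝ (⊤ : ℕ∞) (unc3 u)) (w p : EW4) :
    pdv (CoD u) w p = -(pdv (pdv (unc3 u) (0,0,1)) (prj w) (prj p)) := by
  rw [show pdv (CoD u) w p
      = pdv (fun q : EW4 => -(pdv (unc3 u) (0,0,1) (prj q))) w p from rfl,
    pdv_neg, pdv_comp_prj ((pdv_contDiff hu _).differentiable (by simp))]

lemma pdv_CoB (hu : ContDiff ℝ (⊤ : ℕ∞) (unc3 u)) (w p : EW4) :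
    pdv (CoB u) w p
      = -(p.2.2.2 * pdv (pdv (unc3 u) (0,0,1)) (prj w) (prj p)
          + pdv (unc3 u) (0,0,1) (prj p) * w.2.2.2)
        + pdv (pdv (unc3 u) (0,1,0)) (prj w) (prj p) := by
  have hl : DifferentiableAt ℝ (fun q : EW4 => q.2.2.2) p :=
    lam4_contDiff.differentiable (by simp) p
  have hux : DifferentiableAt ℝ (fun q : EW4 => pdv (unc3 u) (0,0,1) (prj q)) p :=
    (((pdv_contDiff hu _).comp prj.contDiff).differentiable (by simp)) p
  have huy : DifferentiableAt ℝ (fun q : EW4 => pdv (unc3 u) (0,1,0) (prj q)) p :=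
    (((pdv_contDiff hu _).comp prj.contDiff).differentiable (by simp)) p
  rw [show pdv (CoB u) w p
      = pdv (fun q : EW4 => -(q.2.2.2 * pdv (unc3 u) (0,0,1) (prj q))
          + pdv (unc3 u) (0,1,0) (prj q)) w p from rfl,
    pdv_add (hl.fun_mul hux).fun_neg huy, pdv_neg, pdv_mul hl hux, pdv_lam4,
    pdv_comp_prj ((pdv_contDiff hu _).differentiable (by simp)),
    pdv_comp_prj ((pdv_contDiff hu _).differentiable (by simp))]

lemma pdv_CoA (hu : ContDiff ℝ (⊤ : ℕ∞) (unc3 u)) (hv : ContDiff ℝ (⊤ : ℕ∞) (unc3 v)) (w p : EW4) :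
    pdv (CoA u v) w p
      = (p.2.2.2 * w.2.2.2 + p.2.2.2 * w.2.2.2)
        + (p.2.2.2 * pdv (pdv (unc3 v) (0,0,1)) (prj w) (prj p)
           + pdv (unc3 v) (0,0,1) (prj p) * w.2.2.2)
        + pdv (unc3 u) (prj w) (prj p)
        - pdv (pdv (unc3 v) (0,1,0)) (prj w) (prj p) := by
  have hl : DifferentiableAt ℝ (fun q : EW4 => q.2.2.2) p :=
    lam4_contDiff.differentiable (by simp) p
  have hvx : DifferentiableAt ℝ (fun q : EW4 => pdv (unc3 v) (0,0,1) (prj q)) p :=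
    (((pdv_contDiff hv _).comp prj.contDiff).differentiable (by simp)) p
  have hvy : DifferentiableAt ℝ (fun q : EW4 => pdv (unc3 v) (0,1,0) (prj q)) p :=
    (((pdv_contDiff hv _).comp prj.contDiff).differentiable (by simp)) p
  have hup : DifferentiableAt ℝ (fun q : EW4 => unc3 u (prj q)) p :=
    ((hu.comp prj.contDiff).differentiable (by simp)) p
  rw [show pdv (CoA u v) w p
      = pdv (fun q : EW4 => q.2.2.2 * q.2.2.2 + q.2.2.2 * pdv (unc3 v) (0,0,1) (prj q)
          + unc3 u (prj q) - pdv (unc3 v) (0,1,0) (prj q)) w p from rfl,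
    pdv_sub (((hl.fun_mul hl).fun_add (hl.fun_mul hvx)).fun_add hup) hvy,
    pdv_add ((hl.fun_mul hl).fun_add (hl.fun_mul hvx)) hup,
    pdv_add (hl.fun_mul hl) (hl.fun_mul hvx),
    pdv_mul hl hl, pdv_mul hl hvx, pdv_lam4,
    pdv_comp_prj ((pdv_contDiff hv _).differentiable (by simp)),
    pdv_comp_prj ((pdv_contDiff hv _).differentiable (by simp)),
    pdv_comp_prj (hu.differentiable (by simp))]

section conv
variable {f : ℝ → ℝ → ℝ → ℝ}

lemma cv_pt (hf : ContDiff ℝ (⊤ : ℕ∞) (unc3 f)) (t y x : ℝ) :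
    px3 (pt3 f) t y x = pdv (pdv (unc3 f) (1,0,0)) (0,0,1) (t,y,x) := by
  have h1 : pt3 f = fun a b c => pdv (unc3 f) (1,0,0) ((a,b,c) : EW3) :=
    funext fun a => funext fun b => funext fun c =>
      pt3_eq ((hf.differentiable (by simp)) (a,b,c))
  rw [h1]
  exact px3_eq (((pdv_contDiff hf (1,0,0)).differentiable (by simp)) (t,y,x))

lemma cv_pyy (hf : ContDiff ℝ (⊤ : ℕ∞) (unc3 f)) (t y x : ℝ) :
    py3 (py3 f) t y x = pdv (pdv (unc3 f) (0,1,0)) (0,1,0) (t,y,x) := by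
  have h1 : py3 f = fun a b c => pdv (unc3 f) (0,1,0) ((a,b,c) : EW3) :=
    funext fun a => funext fun b => funext fun c =>
      py3_eq ((hf.differentiable (by simp)) (a,b,c))
  rw [h1]
  exact py3_eq (((pdv_contDiff hf (0,1,0)).differentiable (by simp)) (t,y,x))

lemma cv_pxy (hf : ContDiff ℝ (⊤ : ℕ∞) (unc3 f)) (t y x : ℝ) :
    px3 (py3 f) t y x = pdv (pdv (unc3 f) (0,1,0)) (0,0,1) (t,y,x) := by
  have h1 : py3 f = fun a b c => pdv (unc3 f) (0,1,0) ((a,b,c) : EW3) :=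
    funext fun a => funext fun b => funext fun c =>
      py3_eq ((hf.differentiable (by simp)) (a,b,c))
  rw [h1]
  exact px3_eq (((pdv_contDiff hf (0,1,0)).differentiable (by simp)) (t,y,x))

lemma cv_pxx (hf : ContDiff ℝ (⊤ : ℕ∞) (unc3 f)) (t y x : ℝ) :
    px3 (px3 f) t y x = pdv (pdv (unc3 f) (0,0,1)) (0,0,1) (t,y,x) := by
  have h1 : px3 f = fun a b c => pdv (unc3 f) (0,0,1) ((a,b,c) : EW3) :=
    funext fun a => funext fun b => funext fun c =>
      px3_eq ((hf.differentiable (by simp)) (a,b,c))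
  rw [h1]
  exact px3_eq (((pdv_contDiff hf (0,0,1)).differentiable (by simp)) (t,y,x))

lemma cv_x (hf : ContDiff ℝ (⊤ : ℕ∞) (unc3 f)) (t y x : ℝ) :
    px3 f t y x = pdv (unc3 f) (0,0,1) (t,y,x) :=
  px3_eq ((hf.differentiable (by simp)) (t,y,x))

lemma cv_y (hf : ContDiff ℝ (⊤ : ℕ∞) (unc3 f)) (t y x : ℝ) :
    py3 f t y x = pdv (unc3 f) (0,1,0) (t,y,x) :=
  py3_eq ((hf.differentiable (by simp)) (t,y,x))

lemma cv_uux (hf : ContDiff ℝ (⊤ : ℕ∞) (unc3 f)) (t y x : ℝ) :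
    px3 (fun a b c => f a b c * px3 f a b c) t y x
      = unc3 f (t,y,x) * pdv (pdv (unc3 f) (0,0,1)) (0,0,1) (t,y,x)
        + pdv (unc3 f) (0,0,1) (t,y,x) * pdv (unc3 f) (0,0,1) (t,y,x) := by
  have h1 : (fun a b c => f a b c * px3 f a b c)
      = fun a b c => unc3 f ((a,b,c) : EW3) * pdv (unc3 f) (0,0,1) ((a,b,c) : EW3) :=
    funext fun a => funext fun b => funext fun c => by
      rw [px3_eq ((hf.differentiable (by simp)) (a,b,c))]; rfl
  rw [h1]
  have h2 : DifferentiableAt ℝ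
      (unc3 (fun a b c => unc3 f ((a,b,c) : EW3) * pdv (unc3 f) (0,0,1) ((a,b,c) : EW3)))
      (t,y,x) :=
    ((hf.mul (pdv_contDiff hf _)).differentiable (by simp)) (t,y,x)
  rw [px3_eq h2,
    show unc3 (fun a b c => unc3 f ((a,b,c) : EW3) * pdv (unc3 f) (0,0,1) ((a,b,c) : EW3))
      = fun r : EW3 => unc3 f r * pdv (unc3 f) (0,0,1) r from rfl,
    pdv_mul ((hf.differentiable (by simp)) (t,y,x))
      (((pdv_contDiff hf _).differentiable (by simp)) (t,y,x))]

end conv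

end ops



lemma commutator_eq {u v : ℝ → ℝ → ℝ → ℝ}
    (hu : ContDiff ℝ (⊤ : ℕ∞) (unc3 u)) (hv : ContDiff ℝ (⊤ : ℕ∞) (unc3 v))
    (ψ : ℝ → ℝ → ℝ → ℝ → ℝ) (hψ : ContDiff ℝ (⊤ : ℕ∞) (unc4 ψ)) (t y x l : ℝ) :
    At u v (Ay u v ψ) t y x l - Ay u v (At u v ψ) t y x l
      = (px3 (pt3 v) t y x + py3 (py3 v) t y x + u t y x * px3 (px3 v) t y x
          + px3 v t y x * px3 (py3 v) t y x - py3 v t y x * px3 (px3 v) t y x)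
          * pdv (unc4 ψ) (0,0,1,0) (t,y,x,l)
        - (px3 (pt3 u) t y x + py3 (py3 u) t y x
            + px3 (fun t y x => u t y x * px3 u t y x) t y x
            + px3 v t y x * px3 (py3 u) t y x
            - py3 v t y x * px3 (px3 u) t y x)
          * pdv (unc4 ψ) (0,0,0,1) (t,y,x,l) := by
  have hψd := hψ.differentiable (by simp)
  have hXT := XT_contDiff hu hv
  have hXY := XY_contDiff hu hv
  have hAy : Ay u v ψ = fun a b c d => fderiv ℝ (unc4 ψ) (a,b,c,d) (XY u v (a,b,c,d)) :=
    funext fun a => funext fun b => funext fun c => funext fun d =>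
      Ay_eq hu hv ψ (hψd (a,b,c,d))
  have hAt : At u v ψ = fun a b c d => fderiv ℝ (unc4 ψ) (a,b,c,d) (XT u v (a,b,c,d)) :=
    funext fun a => funext fun b => funext fun c => funext fun d =>
      At_eq hu hv ψ (hψd (a,b,c,d))
  have hGy : ContDiff ℝ (⊤ : ℕ∞) (fun q : EW4 => fderiv ℝ (unc4 ψ) q (XY u v q)) :=
    (hψ.fderiv_right (by simp)).clm_apply hXY
  have hGt : ContDiff ℝ (⊤ : ℕ∞) (fun q : EW4 => fderiv ℝ (unc4 ψ) q (XT u v q)) :=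
    (hψ.fderiv_right (by simp)).clm_apply hXT
  have e1 : At u v (Ay u v ψ) t y x l
      = fderiv ℝ (fun q : EW4 => fderiv ℝ (unc4 ψ) q (XY u v q)) (t,y,x,l)
          (XT u v (t,y,x,l)) := by
    rw [hAy]
    exact At_eq hu hv _ ((hGy.differentiable (by simp)) (t,y,x,l))
  have e2 : Ay u v (At u v ψ) t y x l
      = fderiv ℝ (fun q : EW4 => fderiv ℝ (unc4 ψ) q (XT u v q)) (t,y,x,l)
          (XY u v (t,y,x,l)) := by
    rw [hAt]
    exact Ay_eq hu hv _ ((hGt.differentiable (by simp)) (t,y,x,l))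
  rw [e1, e2,
    bracket hψ (hXT.differentiable (by simp)) (hXY.differentiable (by simp)) (t,y,x,l),
    fderiv_XY hu hv (t,y,x,l) (XT u v (t,y,x,l)),
    fderiv_XT hu hv (t,y,x,l) (XY u v (t,y,x,l)),
    fderiv_apply_xl, fderiv_apply_xl,
    pdv_CoC hv (XT u v (t,y,x,l)) (t,y,x,l),
    pdv_CoD hu (XT u v (t,y,x,l)) (t,y,x,l),
    pdv_CoA hu hv (XY u v (t,y,x,l)) (t,y,x,l),
    pdv_CoB hu (XY u v (t,y,x,l)) (t,y,x,l)]
  simp only [show prj (XT u v (t,y,x,l)) = ((1,0,CoA u v (t,y,x,l)) : EW3) from rfl,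
    show prj (XY u v (t,y,x,l)) = ((0,1,CoC v (t,y,x,l)) : EW3) from rfl,
    show (XT u v (t,y,x,l)).2.2.2 = CoB u (t,y,x,l) from rfl,
    show (XY u v (t,y,x,l)).2.2.2 = CoD u (t,y,x,l) from rfl,
    show prj ((t,y,x,l) : EW4) = ((t,y,x) : EW3) from rfl,
    show ((t,y,x,l) : EW4).2.2.2 = l from rfl]
  rw [pdv3_dir (pdv (unc3 v) (0,0,1)) (t,y,x) 1 0 (CoA u v (t,y,x,l)),
    pdv3_dir (pdv (unc3 u) (0,0,1)) (t,y,x) 1 0 (CoA u v (t,y,x,l)),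
    pdv3_dir (pdv (unc3 v) (0,0,1)) (t,y,x) 0 1 (CoC v (t,y,x,l)),
    pdv3_dir (unc3 u) (t,y,x) 0 1 (CoC v (t,y,x,l)),
    pdv3_dir (pdv (unc3 v) (0,1,0)) (t,y,x) 0 1 (CoC v (t,y,x,l)),
    pdv3_dir (pdv (unc3 u) (0,0,1)) (t,y,x) 0 1 (CoC v (t,y,x,l)),
    pdv3_dir (pdv (unc3 u) (0,1,0)) (t,y,x) 0 1 (CoC v (t,y,x,l))]
  rw [cv_pt hv, cv_pyy hv, cv_pxx hv, cv_pxy hv, cv_x hv, cv_y hv,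
    cv_pt hu, cv_pyy hu, cv_pxy hu, cv_pxx hu, cv_uux hu]
  rw [pdv_comm hv (0,0,1) (1,0,0) (t,y,x),
    pdv_comm hv (0,0,1) (0,1,0) (t,y,x),
    pdv_comm hu (0,0,1) (1,0,0) (t,y,x),
    pdv_comm hu (0,0,1) (0,1,0) (t,y,x)]
  simp only [CoA, CoB, CoC, CoD, prj_apply, unc3]
  ring


noncomputable def xc4 : EW4 →L[ℝ] ℝ :=
  (ContinuousLinearMap.fst ℝ ℝ ℝ).comp ((ContinuousLinearMap.snd ℝ ℝ (ℝ × ℝ)).comp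
    (ContinuousLinearMap.snd ℝ ℝ (ℝ × ℝ × ℝ)))

lemma pdv_xc4 (w p : EW4) : pdv (fun q : EW4 => q.2.2.1) w p = w.2.2.1 := by
  simp only [pdv]
  rw [show (fun q : EW4 => q.2.2.1) = ⇑xc4 from rfl, xc4.fderiv]
  rfl

lemma pdv_lam4' (w p : EW4) : pdv (fun q : EW4 => q.2.2.2) w p = w.2.2.2 := pdv_lam4 w p

end EWaux


/-- `[A_t, A_y] = 0` identically in `λ` iff `(u, v)` satisfies the
Einstein–Weyl system. -/
theorem einstein_weyl_lax (u v : ℝ → ℝ → ℝ → ℝ)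
    (hu : ContDiff ℝ (⊤ : ℕ∞) (fun p : ℝ × ℝ × ℝ => u p.1 p.2.1 p.2.2))
    (hv : ContDiff ℝ (⊤ : ℕ∞) (fun p : ℝ × ℝ × ℝ => v p.1 p.2.1 p.2.2)) :
    (∀ (ψ : ℝ → ℝ → ℝ → ℝ → ℝ),
        ContDiff ℝ (⊤ : ℕ∞) (fun p : ℝ × ℝ × ℝ × ℝ => ψ p.1 p.2.1 p.2.2.1 p.2.2.2) →
        ∀ t y x l : ℝ, At u v (Ay u v ψ) t y x l = Ay u v (At u v ψ) t y x l)
      ↔ (∀ t y x : ℝ,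
          (px3 (pt3 u) t y x + py3 (py3 u) t y x
              + px3 (fun t y x => u t y x * px3 u t y x) t y x
              + px3 v t y x * px3 (py3 u) t y x
              - py3 v t y x * px3 (px3 u) t y x = 0)
          ∧ (px3 (pt3 v) t y x + py3 (py3 v) t y x
              + u t y x * px3 (px3 v) t y x
              + px3 v t y x * px3 (py3 v) t y x
              - py3 v t y x * px3 (px3 v) t y x = 0)) := by

  have hu' : ContDiff ℝ (⊤ : ℕ∞) (unc3 u) := hu
  have hv' : ContDiff ℝ (⊤ : ℕ∞) (unc3 v) := hv
  constructor
  · intro H t y x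
    constructor
    · -- use ψ = λ-coordinate
      have hψ : ContDiff ℝ (⊤ : ℕ∞) (unc4 (fun _ _ _ d => d)) := lam4.contDiff
      have hc := commutator_eq hu' hv' (fun _ _ _ d => d) hψ t y x 0
      rw [show unc4 (fun _ _ _ d => (d : ℝ)) = fun q : EW4 => q.2.2.2 from rfl,
        pdv_lam4', pdv_lam4'] at hc
      have h0 := H (fun _ _ _ d => d) hψ t y x 0
      rw [sub_eq_zero.mpr h0] at hc
      simp at hc
      linarith
    · -- use ψ = x-coordinate
      have hψ : ContDiff ℝ (⊤ : ℕ∞) (unc4 (fun _ _ c _ => c)) := xc4.contDiff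
      have hc := commutator_eq hu' hv' (fun _ _ c _ => c) hψ t y x 0
      rw [show unc4 (fun _ _ c (_ : ℝ) => (c : ℝ)) = fun q : EW4 => q.2.2.1 from rfl,
        pdv_xc4, pdv_xc4] at hc
      have h0 := H (fun _ _ c _ => c) hψ t y x 0
      rw [sub_eq_zero.mpr h0] at hc
      simp at hc
      linarith
  · intro h ψ hψ t y x l
    have hc := commutator_eq hu' hv' ψ hψ t y x l
    rw [(h t y x).1, (h t y x).2] at hc
    simp at hc
    linarith [hc]
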